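/- Every finite metric space can be isometrically embedded into the Gromov–Hausdorff space: for every nonempty finite metric space X there is a map K : X → 𝒢ℋ into the space of isometry classes of nonempty compact metric spaces such that d_GH(K(x), K(y)) = d(x, y) for all x, y ∈ X. -/
import Mathlib

open Metric Set Function GromovHausdorff

namespace GHEmbedAux

set_option linter.unusedSectionVars false

/-! ### Numeric lemmas -/

lemma pow3_aux {i j k l : ℕ} (hij : i < j) (hkl : k < l)
    (h : 3 ^ i + 3 ^ j = 3 ^ k + 3 ^ l) : i = k ∧ j = l := by
  have key : ∀ {a b c d : ℕ}, a < b → c < d → b < d →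
      3 ^ a + 3 ^ b ≠ 3 ^ c + 3 ^ d := by
    intro a b c d hab hcd hbd
    have h1 : 3 ^ a ≤ 3 ^ b := Nat.pow_le_pow_right (by norm_num) hab.le
    have h2 : 3 ^ (b + 1) ≤ 3 ^ d := Nat.pow_le_pow_right (by norm_num) hbd
    have h3 : 3 ^ (b + 1) = 3 * 3 ^ b := by ring
    have h4 : 1 ≤ 3 ^ c := Nat.one_le_pow _ _ (by norm_num)
    omega
  have hjl : j = l := by
    rcases lt_trichotomy j l with hlt | heq | hgt
    · exact absurd h (key hij hkl hlt)
    · exact heq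
    · exact absurd h.symm (key hkl hij hgt)
  subst hjl
  have : 3 ^ i = 3 ^ k := by omega
  exact ⟨Nat.pow_right_injective (by norm_num) this, rfl⟩

lemma pow3_pair {i j k l : ℕ} (hij : i ≠ j) (hkl : k ≠ l)
    (h : 3 ^ i + 3 ^ j = 3 ^ k + 3 ^ l) :
    (i = k ∧ j = l) ∨ (i = l ∧ j = k) := by
  rcases hij.lt_or_gt with h1 | h1 <;> rcases hkl.lt_or_gt with h2 | h2
  · exact Or.inl (pow3_aux h1 h2 h)
  · exact Or.inr ((pow3_aux h1 h2 (by omega)).imp id id)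
  · have := pow3_aux h1 h2 (by omega)
    exact Or.inr ⟨this.2, this.1⟩
  · have := pow3_aux h1 h2 (by omega)
    exact Or.inl ⟨this.2, this.1⟩

lemma nat_cast_gap {s t : ℕ} (h : s ≠ t) : (1:ℝ) ≤ |(s:ℝ) - (t:ℝ)| := by
  have h0 : ((s:ℤ) - t) ≠ 0 := sub_ne_zero.2 (by exact_mod_cast h)
  have h1 : (1:ℤ) ≤ |(s:ℤ) - t| := Int.one_le_abs h0
  exact_mod_cast h1

/-! ### Construction of the marked spaces -/

variable (X : Type*) [MetricSpace X] [Fintype X]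

noncomputable def rr : Option X → ℕ :=
  (Countable.exists_injective_nat (Option X)).choose

lemma rr_inj : Injective (rr X) :=
  (Countable.exists_injective_nat (Option X)).choose_spec

noncomputable def DD : ℝ := diam (univ : Set X)

lemma DD_nonneg : 0 ≤ DD X := diam_nonneg

lemma dist_le_DD (a b : X) : dist a b ≤ DD X :=
  dist_le_diam_of_mem finite_univ.isBounded (mem_univ a) (mem_univ b)

/-- Large, well-separated "label" values. -/
noncomputable def ff (u : Option X) : ℝ :=
  (6 * DD X + 1) * ((3 ^ rr X u : ℕ) : ℝ)

lemma ff_nonneg (u : Option X) : 0 ≤ ff X u := by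
  have := DD_nonneg X
  have h1 : (0:ℝ) ≤ 6 * DD X + 1 := by linarith
  exact mul_nonneg h1 (by positivity)

/-- Separation of pair sums of labels. -/
lemma ff_gap {u v u' v' : Option X} (huv : u ≠ v) (huv' : u' ≠ v')
    (h1 : ¬(u' = u ∧ v' = v)) (h2 : ¬(u' = v ∧ v' = u)) :
    6 * DD X + 1 ≤ |ff X u + ff X v - (ff X u' + ff X v')| := by
  set B := 6 * DD X + 1 with hB
  have hBpos : (0:ℝ) < B := by have := DD_nonneg X; rw [hB]; linarith
  set i := rr X u; set j := rr X v; set k := rr X u'; set l := rr X v'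
  have hij : i ≠ j := fun h => huv (rr_inj X h)
  have hkl : k ≠ l := fun h => huv' (rr_inj X h)
  have hst : (3 ^ i + 3 ^ j : ℕ) ≠ (3 ^ k + 3 ^ l : ℕ) := by
    intro h
    rcases pow3_pair hij hkl h with ⟨ha, hb⟩ | ⟨ha, hb⟩
    · exact h1 ⟨(rr_inj X ha).symm, (rr_inj X hb).symm⟩
    · exact h2 ⟨(rr_inj X hb).symm, (rr_inj X ha).symm⟩
  have hsum : ff X u + ff X v - (ff X u' + ff X v')
      = B * (((3 ^ i + 3 ^ j : ℕ) : ℝ) - ((3 ^ k + 3 ^ l : ℕ) : ℝ)) := by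
    simp only [ff]; push_cast; ring
  calc B = B * 1 := by ring
    _ ≤ B * |((3 ^ i + 3 ^ j : ℕ) : ℝ) - ((3 ^ k + 3 ^ l : ℕ) : ℝ)| :=
        mul_le_mul_of_nonneg_left (nat_cast_gap hst) hBpos.le
    _ = |ff X u + ff X v - (ff X u' + ff X v')| := by
        rw [hsum, abs_mul, abs_of_pos hBpos]

/-- The big constant. -/
noncomputable def CC : ℝ := 2 * (∑ u : Option X, ff X u) + 4 * DD X + 1

lemma ff_le_sum (u : Option X) : ff X u ≤ ∑ v : Option X, ff X v :=
  Finset.single_le_sum (fun v _ => ff_nonneg X v) (Finset.mem_univ u)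

lemma CC_big : 2 * DD X < CC X := by
  have h1 : 0 ≤ ∑ u : Option X, ff X u :=
    Finset.sum_nonneg (fun v _ => ff_nonneg X v)
  have h2 := DD_nonneg X
  unfold CC; linarith

lemma CC_pos : 0 < CC X := lt_of_le_of_lt (by linarith [DD_nonneg X]) (CC_big X)

/-- The cross term recording the marked point. -/
def ee (x : X) : Option X → Option X → ℝ
  | some a, none => 2 * dist a x
  | none, some b => 2 * dist b x
  | _, _ => 0

lemma ee_nonneg (x : X) (u v : Option X) : 0 ≤ ee X x u v := by
  rcases u with _ | a <;> rcases v with _ | b <;> simp only [ee] <;> positivity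

lemma ee_le (x : X) (u v : Option X) : ee X x u v ≤ 2 * DD X := by
  have h := DD_nonneg X
  rcases u with _ | a <;> rcases v with _ | b <;> simp only [ee]
  · linarith
  · linarith [dist_le_DD X b x]
  · linarith [dist_le_DD X a x]
  · linarith

lemma ee_comm (x : X) (u v : Option X) : ee X x u v = ee X x v u := by
  rcases u with _ | a <;> rcases v with _ | b <;> simp [ee]

open Classical in
/-- The distance of the marked space at `x`. -/
noncomputable def dd (x : X) (u v : Option X) : ℝ :=
  if u = v then 0 else CC X + ff X u + ff X v + ee X x u v

lemma dd_self (x : X) (u : Option X) : dd X x u u = 0 := by simp [dd]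

lemma dd_of_ne (x : X) {u v : Option X} (h : u ≠ v) :
    dd X x u v = CC X + ff X u + ff X v + ee X x u v := by simp [dd, h]

lemma dd_nonneg (x : X) (u v : Option X) : 0 ≤ dd X x u v := by
  rcases eq_or_ne u v with rfl | h
  · rw [dd_self]
  · rw [dd_of_ne X x h]
    linarith [CC_pos X, ff_nonneg X u, ff_nonneg X v, ee_nonneg X x u v]

lemma dd_ge_CC (x : X) {u v : Option X} (h : u ≠ v) : CC X ≤ dd X x u v := by
  rw [dd_of_ne X x h]
  linarith [ff_nonneg X u, ff_nonneg X v, ee_nonneg X x u v]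

lemma dd_le_2CC (x : X) (u v : Option X) : dd X x u v ≤ 2 * CC X := by
  rcases eq_or_ne u v with rfl | h
  · rw [dd_self]; linarith [CC_pos X]
  · rw [dd_of_ne X x h]
    have h1 := ff_le_sum X u
    have h2 := ff_le_sum X v
    have h3 := ee_le X x u v
    have h4 := DD_nonneg X
    unfold CC at *; linarith

lemma dd_comm (x : X) (u v : Option X) : dd X x u v = dd X x v u := by
  rcases eq_or_ne u v with rfl | h
  · rfl
  · rw [dd_of_ne X x h, dd_of_ne X x h.symm, ee_comm]; ring

lemma dd_triangle (x : X) (u v w : Option X) :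
    dd X x u w ≤ dd X x u v + dd X x v w := by
  rcases eq_or_ne u w with rfl | huw
  · rw [dd_self]; exact add_nonneg (dd_nonneg X x _ _) (dd_nonneg X x _ _)
  rcases eq_or_ne u v with rfl | huv
  · rw [dd_self]; linarith [dd_nonneg X x u w]
  rcases eq_or_ne v w with rfl | hvw
  · rw [dd_self]; linarith [dd_nonneg X x u v]
  have h1 := dd_le_2CC X x u w
  have h2 := dd_ge_CC X x huv
  have h3 := dd_ge_CC X x hvw
  linarith

/-- The identity distortion between the spaces marked at `x` and at `y`. -/
lemma dd_dd_le (x y : X) (u v : Option X) :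
    |dd X x u v - dd X y u v| ≤ 2 * dist x y := by
  rcases eq_or_ne u v with rfl | h
  · simp [dd_self, dist_nonneg]
  rw [dd_of_ne X x h, dd_of_ne X y h]
  have heq : CC X + ff X u + ff X v + ee X x u v - (CC X + ff X u + ff X v + ee X y u v)
      = ee X x u v - ee X y u v := by ring
  rw [heq]
  rcases u with _ | a <;> rcases v with _ | b <;> simp only [ee]
  · simp [dist_nonneg]
  · have h2 : |dist x b - dist y b| ≤ dist x y := abs_dist_sub_le x y b
    rw [dist_comm b x, dist_comm b y,
      show 2 * dist x b - 2 * dist y b = 2 * (dist x b - dist y b) by ring, abs_mul,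
      abs_of_nonneg (by norm_num : (0:ℝ) ≤ 2)]
    linarith
  · have h2 : |dist x a - dist y a| ≤ dist x y := abs_dist_sub_le x y a
    rw [dist_comm a x, dist_comm a y,
      show 2 * dist x a - 2 * dist y a = 2 * (dist x a - dist y a) by ring, abs_mul,
      abs_of_nonneg (by norm_num : (0:ℝ) ≤ 2)]
    linarith
  · simp [dist_nonneg]

/-- The marked space: a type synonym for `Option X`. -/
def Marked (x : X) : Type _ := Option X

def ofOpt (x : X) (u : Option X) : Marked X x := u

def toOpt (x : X) (u : Marked X x) : Option X := u

instance (x : X) : Nonempty (Marked X x) := ⟨ofOpt X x none⟩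

instance (x : X) : Finite (Marked X x) := by
  unfold Marked; infer_instance

noncomputable instance markedMetric (x : X) : MetricSpace (Marked X x) where
  dist u v := dd X x (toOpt X x u) (toOpt X x v)
  dist_self u := dd_self X x _
  dist_comm u v := dd_comm X x _ _
  dist_triangle u v w := dd_triangle X x _ _ _
  eq_of_dist_eq_zero := by
    intro u v h
    by_contra hne
    have h2 : toOpt X x u ≠ toOpt X x v := fun hh => hne hh
    have h3 : dd X x (toOpt X x u) (toOpt X x v) = 0 := h
    have h4 := dd_ge_CC X x h2
    have h5 := CC_pos X
    linarith

lemma dist_marked (x : X) (u v : Option X) :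
    dist (ofOpt X x u) (ofOpt X x v) = dd X x u v := rfl

noncomputable def K (x : X) : GHSpace := toGHSpace (Marked X x)

lemma dist_K (x y : X) : dist (K X x) (K X y) = ghDist (Marked X x) (Marked X y) := rfl

/-! ### Upper bound -/

lemma upper (x y : X) : ghDist (Marked X x) (Marked X y) ≤ dist x y := by
  have h := ghDist_le_of_approx_subsets
    (X := Marked X x) (Y := Marked X y)
    (s := (univ : Set (Marked X x)))
    (Φ := fun u => ofOpt X y (toOpt X x u.1))
    (ε₁ := 0) (ε₂ := 2 * dist x y) (ε₃ := 0)
    (fun u => ⟨u, mem_univ u, le_of_eq (dist_self u)⟩)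
    (fun w => ⟨⟨ofOpt X x (toOpt X y w), mem_univ _⟩, le_of_eq (dist_self w)⟩)
    (fun u v => dd_dd_le X x y (toOpt X x u.1) (toOpt X x v.1))
  linarith

/-! ### Lower bound -/

lemma three_distinct {x y : X} (hxy : x ≠ y) (u : Option X) :
    ∃ v w : Option X, v ≠ w ∧ v ≠ u ∧ w ≠ u := by
  rcases u with _ | a
  · exact ⟨some x, some y, by simpa using hxy, by simp, by simp⟩
  · by_cases hax : a = x
    · exact ⟨none, some y, by simp, by simp, by simp [hax, Ne.symm hxy]⟩
    · exact ⟨none, some x, by simp, by simp, by simp [Ne.symm hax]⟩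

lemma move_pair {σ : Option X → Option X} {x y : X} (hxy : x ≠ y)
    (hmove : ∃ u, σ u ≠ u) :
    ∃ u v, u ≠ v ∧ ¬(σ u = u ∧ σ v = v) ∧ ¬(σ u = v ∧ σ v = u) := by
  obtain ⟨u, hu⟩ := hmove
  obtain ⟨v, w, hvw, hvu, hwu⟩ := three_distinct X hxy u
  by_cases hv : σ u = v ∧ σ v = u
  · refine ⟨u, w, Ne.symm hwu, ?_, ?_⟩
    · rintro ⟨h1, _⟩; exact hu h1
    · rintro ⟨h1, _⟩; exact hvw (hv.1.symm.trans h1)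
  · refine ⟨u, v, Ne.symm hvu, ?_, hv⟩
    rintro ⟨h1, _⟩; exact hu h1

lemma lower (x y : X) : dist x y ≤ ghDist (Marked X x) (Marked X y) := by
  rcases eq_or_ne x y with rfl | hxy
  · rw [dist_self]
    show (0:ℝ) ≤ dist (toGHSpace (Marked X x)) (toGHSpace (Marked X x))
    exact dist_nonneg
  refine le_of_forall_pos_le_add fun ε hε => ?_
  set r := ghDist (Marked X x) (Marked X y) with hr
  set A := range (optimalGHInjl (Marked X x) (Marked X y)) with hA
  set B := range (optimalGHInjr (Marked X x) (Marked X y)) with hB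
  have hH : hausdorffDist A B = r := hausdorffDist_optimal
  have hAc : IsCompact A := isCompact_range (isometry_optimalGHInjl _ _).continuous
  have hBc : IsCompact B := isCompact_range (isometry_optimalGHInjr _ _).continuous
  have hfin : EMetric.hausdorffEdist A B ≠ ⊤ :=
    Metric.hausdorffEdist_ne_top_of_nonempty_of_bounded (range_nonempty _) (range_nonempty _)
      hAc.isBounded hBc.isBounded
  have hrε : hausdorffDist A B < r + ε := by
    rw [hH]; linarith
  have hchoice : ∀ u : Marked X x, ∃ v : Marked X y,
      dist (optimalGHInjl (Marked X x) (Marked X y) u)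
        (optimalGHInjr (Marked X x) (Marked X y) v) < r + ε := by
    intro u
    obtain ⟨b, hb, hbd⟩ := exists_dist_lt_of_hausdorffDist_lt (mem_range_self u) hrε hfin
    obtain ⟨v, rfl⟩ := hb
    exact ⟨v, hbd⟩
  choose φ hφ using hchoice
  have key : ∀ u v : Marked X x,
      |dist u v - dist (φ u) (φ v)| ≤ 2 * (r + ε) := by
    intro u v
    have h1 := dist_dist_dist_le (optimalGHInjl (Marked X x) (Marked X y) u)
      (optimalGHInjl (Marked X x) (Marked X y) v)
      (optimalGHInjr (Marked X x) (Marked X y) (φ u))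
      (optimalGHInjr (Marked X x) (Marked X y) (φ v))
    rw [(isometry_optimalGHInjl (Marked X x) (Marked X y)).dist_eq,
      (isometry_optimalGHInjr (Marked X x) (Marked X y)).dist_eq, Real.dist_eq] at h1
    linarith [hφ u, hφ v]
  by_contra hcon
  push_neg at hcon
  have hdD : dist x y ≤ DD X := dist_le_DD X x y
  have hCC := CC_big X
  have hDD := DD_nonneg X
  set σ : Option X → Option X := fun u => toOpt X y (φ (ofOpt X x u)) with hσ
  have keyσ : ∀ u v : Option X, |dd X x u v - dd X y (σ u) (σ v)| ≤ 2 * (r + ε) :=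
    fun u v => key (ofOpt X x u) (ofOpt X x v)
  -- σ is injective
  have hσinj : Injective σ := by
    intro u v h
    by_contra hne
    have h1 := keyσ u v
    rw [show dd X y (σ u) (σ v) = 0 by rw [h, dd_self], sub_zero,
      abs_of_nonneg (dd_nonneg X x u v)] at h1
    have h2 := dd_ge_CC X x hne
    linarith
  -- σ is the identity
  have hσid : ∀ u, σ u = u := by
    by_contra hne
    push_neg at hne
    obtain ⟨u, v, huv, h1, h2⟩ := move_pair X hxy hne
    have hσuv : σ u ≠ σ v := fun h => huv (hσinj h)
    have hgap := ff_gap X huv hσuv h1 h2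
    have hk := keyσ u v
    rw [dd_of_ne X x huv, dd_of_ne X y hσuv] at hk
    have he1 := ee_nonneg X x u v
    have he2 := ee_le X x u v
    have he3 := ee_nonneg X y (σ u) (σ v)
    have he4 := ee_le X y (σ u) (σ v)
    rcases abs_cases (ff X u + ff X v - (ff X (σ u) + ff X (σ v))) with ⟨ha, _⟩ | ⟨ha, _⟩ <;>
      rcases abs_cases (CC X + ff X u + ff X v + ee X x u v
        - (CC X + ff X (σ u) + ff X (σ v) + ee X y (σ u) (σ v))) with ⟨hb, _⟩ | ⟨hb, _⟩ <;>
      linarith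
  -- contradiction from the pair (some x, none)
  have hk := keyσ (some x) none
  rw [hσid (some x), hσid none,
    dd_of_ne X x (by simp : (some x : Option X) ≠ none),
    dd_of_ne X y (by simp : (some x : Option X) ≠ none)] at hk
  simp only [ee] at hk
  rw [dist_self x] at hk
  rw [show CC X + ff X (some x) + ff X none + 2 * 0
      - (CC X + ff X (some x) + ff X none + 2 * dist x y) = -(2 * dist x y) by ring,
    abs_neg, abs_of_nonneg (by positivity)] at hk
  linarith

end GHEmbedAux

/-- Every nonempty finite metric space embeds isometrically into the
Gromov–Hausdorff space. -/
theorem finite_metric_space_isometric_embedding_GH (X : Type*) [MetricSpace X]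
    [Finite X] [Nonempty X] :
    ∃ K : X → GromovHausdorff.GHSpace, ∀ x y : X, dist (K x) (K y) = dist x y := by
  cases nonempty_fintype X
  refine ⟨GHEmbedAux.K X, fun x y => ?_⟩
  rw [GHEmbedAux.dist_K]
  exact le_antisymm (GHEmbedAux.upper X x y) (GHEmbedAux.lower X x y)
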